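/- Let n ≥ 1 and consider extended phase space ℝ^(n+1) × ℝ^(n+1) with coordinates z = (q₁,…,qₙ, t, p₁,…,pₙ, ℘), and let d = 2(n+1). Let H : ℝ^(n+1) × ℝ^(n+1) → ℝ be three times continuously differentiable with ∂H/∂℘ ≡ 0 (H depends only on (q₁,…,qₙ, t, p₁,…,pₙ)), and define the extended Hamiltonian 𝓗(z) = ℘ + H(z) and ψ(z) = ⟨J∇𝓗(z), (Hess 𝓗(z))(J∇𝓗(z))⟩. Let L(z) = ½⟨z, Az⟩ + ⟨b, z⟩ + c be a quadratic function with A symmetric, satisfying ∂L/∂t ≡ 0, ∂L/∂℘ ≡ 0, and Σᵢ₌₁ⁿ (∂L/∂qᵢ · ∂H/∂pᵢ − ∂L/∂pᵢ · ∂H/∂qᵢ)(z) = 0 for all z. If z₀, z₁ ∈ ℝ^d and λ, μ ∈ ℝ satisfy z₁ − z₀ = λ J∇𝓗(z̄) + μ J∇ψ(z̄) with z̄ = (z₀ + z₁)/2, then L(z₁) = L(z₀). -/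

import Mathlib

noncomputable section

open scoped RealInnerProductSpace

/-- `ℝ^m` with the Euclidean inner product. -/
abbrev V (m : ℕ) : Type := EuclideanSpace ℝ (Fin m)

/-- Phase space `ℝ^m × ℝ^m ≅ ℝ^(2m)`, with the Euclidean (`L²`) inner product. -/
abbrev Phase (m : ℕ) : Type := WithLp 2 (V m × V m)

/-- The identification `Phase m ≃ ℝ^m × ℝ^m`. -/
def e (m : ℕ) : Phase m ≃L[ℝ] V m × V m := WithLp.prodContinuousLinearEquiv 2 ℝ (V m) (V m)

/-- The point `z = (q, p)` of phase space. -/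
def pt {m : ℕ} (q p : V m) : Phase m := (e m).symm (q, p)

/-- The position (`q`) part of a phase-space point. -/
def qpart {m : ℕ} (z : Phase m) : V m := ((e m) z).1

/-- The momentum (`p`) part of a phase-space point. -/
def ppart {m : ℕ} (z : Phase m) : V m := ((e m) z).2

/-- The standard symplectic matrix `J`, acting by `J (q, p) = (p, -q)`. -/
def Jmap {m : ℕ} : Phase m →L[ℝ] Phase m :=
  ((e m).symm : V m × V m →L[ℝ] Phase m).comp
    (((ContinuousLinearMap.snd ℝ (V m) (V m)).prod
      (-(ContinuousLinearMap.fst ℝ (V m) (V m)))).comp ((e m) : Phase m →L[ℝ] V m × V m))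

/-- The Hessian of `H` at `z`, viewed as a linear map: the derivative of the gradient. -/
def hess {m : ℕ} (H : Phase m → ℝ) (z : Phase m) : Phase m →L[ℝ] Phase m :=
  fderiv ℝ (gradient H) z

/-- `ψ_H(z) = ⟨J ∇H(z), (Hess H(z)) (J ∇H(z))⟩`. -/
def psi {m : ℕ} (H : Phase m → ℝ) (z : Phase m) : ℝ :=
  ⟪Jmap (gradient H z), hess H z (Jmap (gradient H z))⟫

/-!
The quadratic `L` generates the affine Hamiltonian flow `ż = J (A z + b)`, and the hypotheses say
that `𝓗` is invariant along it: since the `t`- and `℘`-components of `∇L` vanish,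
`⟪∇L, J ∇𝓗⟫` reduces to the ordinary bracket `[L, H] = 0`. An affine symplectic flow that preserves
`𝓗` also preserves `ψ_𝓗`, which is built from `𝓗` by `J`, gradients and Hessians alone.
Infinitesimally: differentiating `⟪A z + b, J ∇𝓗 z⟫ ≡ 0` once gives `Hess 𝓗 (J (A z + b)) = A J ∇𝓗`,
differentiating again and using the symmetry of third derivatives gives `⟪∇L, J ∇ψ_𝓗⟫ = 0`.
Finally the midpoint rule is exact for quadratics, `L z₁ - L z₀ = ⟪∇L z̄, z₁ - z₀⟫`, and the step
equation turns this into a combination of the two vanishing brackets.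
-/

section Gradient

variable {E : Type*} [NormedAddCommGroup E] [InnerProductSpace ℝ E] [CompleteSpace E]

theorem inner_fderiv_gradient_left (f : E → ℝ) (z v w : E) :
    ⟪fderiv ℝ (gradient f) z v, w⟫ = fderiv ℝ (fderiv ℝ f) z v w := by
  have h : gradient f = (InnerProductSpace.toDual ℝ E).symm ∘ fderiv ℝ f := rfl
  rw [h, LinearIsometryEquiv.comp_fderiv]
  exact InnerProductSpace.toDual_symm_apply

theorem ContDiff.gradient {f : E → ℝ} {m n : WithTop ℕ∞} (hf : ContDiff ℝ n f) (hmn : m + 1 ≤ n) :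
    ContDiff ℝ m (gradient f) :=
  (InnerProductSpace.toDual ℝ E).symm.contDiff.comp (hf.fderiv_right hmn)

theorem inner_fderiv_gradient_comm {f : E → ℝ} {z : E} (hf : ContDiffAt ℝ 2 f z) (v w : E) :
    ⟪fderiv ℝ (gradient f) z v, w⟫ = ⟪v, fderiv ℝ (gradient f) z w⟫ := by
  rw [inner_fderiv_gradient_left, real_inner_comm _ v, inner_fderiv_gradient_left]
  exact hf.isSymmSndFDerivAt (by simp) v w

theorem hasFDerivAt_fderiv_gradient {f : E → ℝ} (hf : ContDiff ℝ 3 f) (z : E) :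
    HasFDerivAt (fderiv ℝ (gradient f)) (fderiv ℝ (fderiv ℝ (gradient f)) z) z :=
  (((hf.gradient (m := 2) (by norm_num)).fderiv_right (m := 1) (by norm_num)).differentiable
    one_ne_zero z).hasFDerivAt

end Gradient

section Quadratic

variable {E : Type*} [NormedAddCommGroup E] [InnerProductSpace ℝ E]
  {A : E →L[ℝ] E} {b : E} {c : ℝ} {L : E → ℝ}

theorem hasGradientAt_of_quadratic [CompleteSpace E] (hA : ∀ v w, ⟪A v, w⟫ = ⟪v, A w⟫)
    (hL : ∀ z, L z = (1 / 2 : ℝ) * ⟪z, A z⟫ + ⟪b, z⟫ + c) (z : E) :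
    HasGradientAt L (A z + b) z := by
  have hquad := ((hasFDerivAt_id z).inner ℝ A.hasFDerivAt).const_mul (1 / 2 : ℝ)
  rw [hasGradientAt_iff_hasFDerivAt, funext hL]
  refine ((hquad.add (innerSL ℝ b).hasFDerivAt).add_const c).congr_fderiv ?_
  ext v
  simp [fderivInnerCLM_apply, hA z v, real_inner_comm (A z) v]
  ring

theorem sub_eq_inner_midpoint_of_quadratic (hA : ∀ v w, ⟪A v, w⟫ = ⟪v, A w⟫)
    (hL : ∀ z, L z = (1 / 2 : ℝ) * ⟪z, A z⟫ + ⟪b, z⟫ + c) (z₀ z₁ : E) :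
    L z₁ - L z₀ = ⟪A ((2 : ℝ)⁻¹ • (z₀ + z₁)) + b, z₁ - z₀⟫ := by
  have hcross : ⟪A z₀, z₁⟫ = ⟪A z₁, z₀⟫ := (real_inner_comm _ _).trans (hA z₁ z₀).symm
  simp only [hL, map_smul, map_add, inner_add_left, inner_smul_left, inner_sub_right,
    conj_trivial, real_inner_comm (A _) z₀, real_inner_comm (A _) z₁] at hcross ⊢
  linarith

end Quadratic

section HamiltonianFlow

variable {E : Type*} [NormedAddCommGroup E] [InnerProductSpace ℝ E] [CompleteSpace E]

/-- `ψ_F` for an arbitrary `J`; on phase space `psi = psiWith Jmap` definitionally. -/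
def psiWith (J : E →L[ℝ] E) (F : E → ℝ) (z : E) : ℝ :=
  ⟪J (gradient F z), fderiv ℝ (gradient F) z (J (gradient F z))⟫

variable {J A : E →L[ℝ] E} {b : E} {F : E → ℝ}

theorem fderiv_psiWith_apply (hF : ContDiff ℝ 3 F) (z v : E) :
    fderiv ℝ (psiWith J F) z v =
      ⟪J (fderiv ℝ (gradient F) z v), fderiv ℝ (gradient F) z (J (gradient F z))⟫ +
        ⟪J (gradient F z), fderiv ℝ (fderiv ℝ (gradient F)) z v (J (gradient F z)) +
          fderiv ℝ (gradient F) z (J (fderiv ℝ (gradient F) z v))⟫ := by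
  have hgrad : ContDiff ℝ 2 (gradient F) := hF.gradient (by norm_num)
  have hX : HasFDerivAt (fun y => J (gradient F y)) (J.comp (fderiv ℝ (gradient F) z)) z :=
    J.hasFDerivAt.comp z (hgrad.differentiable two_ne_zero z).hasFDerivAt
  have hψ : HasFDerivAt (psiWith J F) _ z := hX.inner ℝ ((hasFDerivAt_fderiv_gradient hF z).clm_apply hX)
  rw [hψ.fderiv]
  simp [fderivInnerCLM_apply, add_comm]

theorem fderiv_gradient_apply_hamiltonianField (hJ : ∀ u w, ⟪J u, w⟫ = -⟪u, J w⟫)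
    (hA : ∀ v w, ⟪A v, w⟫ = ⟪v, A w⟫) (hF : ContDiff ℝ 2 F)
    (hFL : ∀ z, ⟪A z + b, J (gradient F z)⟫ = 0) (z : E) :
    fderiv ℝ (gradient F) z (J (A z + b)) = A (J (gradient F z)) := by
  have hgrad : HasFDerivAt (gradient F) (fderiv ℝ (gradient F) z) z :=
    ((hF.gradient (by norm_num)).differentiable one_ne_zero z).hasFDerivAt
  have hzero := ((A.hasFDerivAt.add_const b).inner ℝ (J.hasFDerivAt.comp z hgrad)).unique
    ((hasFDerivAt_const 0 z).congr_of_eventuallyEq (.of_forall hFL))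
  refine ext_inner_right ℝ fun v => ?_
  have hv : ⟪A z + b, J (fderiv ℝ (gradient F) z v)⟫ + ⟪A v, J (gradient F z)⟫ = 0 := by
    simpa [fderivInnerCLM_apply] using DFunLike.congr_fun hzero v
  calc ⟪fderiv ℝ (gradient F) z (J (A z + b)), v⟫
      = -⟪A z + b, J (fderiv ℝ (gradient F) z v)⟫ := by
        rw [inner_fderiv_gradient_comm hF.contDiffAt, hJ]
    _ = ⟪A v, J (gradient F z)⟫ := by linarith
    _ = ⟪A (J (gradient F z)), v⟫ := by rw [real_inner_comm, hA]

theorem fderiv_fderiv_gradient_apply_hamiltonianField (hJ : ∀ u w, ⟪J u, w⟫ = -⟪u, J w⟫)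
    (hA : ∀ v w, ⟪A v, w⟫ = ⟪v, A w⟫) (hF : ContDiff ℝ 3 F)
    (hFL : ∀ z, ⟪A z + b, J (gradient F z)⟫ = 0) (z w : E) :
    fderiv ℝ (fderiv ℝ (gradient F)) z w (J (A z + b)) + fderiv ℝ (gradient F) z (J (A w)) =
      A (J (fderiv ℝ (gradient F) z w)) := by
  have hgrad : ContDiff ℝ 2 (gradient F) := hF.gradient (by norm_num)
  have hu : HasFDerivAt (fun y => J (A y + b)) (J.comp A) z :=
    J.hasFDerivAt.comp z (A.hasFDerivAt.add_const b)
  have hrhs : HasFDerivAt (fun y => A (J (gradient F y)))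
      ((A.comp J).comp (fderiv ℝ (gradient F) z)) z :=
    (A.comp J).hasFDerivAt.comp z (hgrad.differentiable two_ne_zero z).hasFDerivAt
  have heq := ((hasFDerivAt_fderiv_gradient hF z).clm_apply hu).unique (hrhs.congr_of_eventuallyEq (.of_forall
    (fderiv_gradient_apply_hamiltonianField hJ hA (hF.of_le (by norm_num)) hFL)))
  simpa [add_comm] using DFunLike.congr_fun heq w

theorem inner_J_gradient_psiWith_eq_zero (hJ : ∀ u w, ⟪J u, w⟫ = -⟪u, J w⟫)
    (hA : ∀ v w, ⟪A v, w⟫ = ⟪v, A w⟫) (hF : ContDiff ℝ 3 F)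
    (hFL : ∀ z, ⟪A z + b, J (gradient F z)⟫ = 0) (z : E) :
    ⟪A z + b, J (gradient (psiWith J F) z)⟫ = 0 := by
  have hHu : fderiv ℝ (gradient F) z (J (A z + b)) = A (J (gradient F z)) :=
    fderiv_gradient_apply_hamiltonianField hJ hA (hF.of_le (by norm_num)) hFL z
  have hsymm : fderiv ℝ (fderiv ℝ (gradient F)) z (J (A z + b)) (J (gradient F z)) =
      fderiv ℝ (fderiv ℝ (gradient F)) z (J (gradient F z)) (J (A z + b)) :=
    (hF.gradient (by norm_num : (2 : WithTop ℕ∞) + 1 ≤ 3)).contDiffAt.isSymmSndFDerivAt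
      (by simp) _ _
  -- with `u = J (A z + b)`, `X = J ∇F z`, the differentiated identity makes the third-derivative
  -- term `D³F(u, X, X)` cancel the two Hessian terms of `Dψ(u)`
  have hψu : fderiv ℝ (psiWith J F) z (J (A z + b)) = 0 := by
    rw [fderiv_psiWith_apply hF, hHu, hsymm, eq_sub_of_add_eq
      (fderiv_fderiv_gradient_apply_hamiltonianField hJ hA hF hFL z _), sub_add_cancel,
      hJ, hA, neg_add_cancel]
  rw [← neg_eq_zero, ← hJ, real_inner_comm, inner_gradient_left, hψu]

end HamiltonianFlow

section ExtendedPhaseSpace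

theorem inner_eq_qpart_add_ppart {m : ℕ} (u w : Phase m) :
    ⟪u, w⟫ = ⟪qpart u, qpart w⟫ + ⟪ppart u, ppart w⟫ :=
  WithLp.prod_inner_apply u w

theorem inner_Jmap_left {m : ℕ} (u w : Phase m) : ⟪Jmap u, w⟫ = -⟪u, Jmap w⟫ := by
  simp only [inner_eq_qpart_add_ppart]
  change ⟪ppart u, qpart w⟫ + ⟪-qpart u, ppart w⟫ = -(⟪qpart u, ppart w⟫ + ⟪ppart u, -qpart w⟫)
  simp only [inner_neg_left, inner_neg_right]
  ring

theorem inner_Jmap_eq_sum {m : ℕ} (u w : Phase m) :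
    ⟪u, Jmap w⟫ = ∑ j, (qpart u j * ppart w j - ppart u j * qpart w j) := by
  rw [inner_eq_qpart_add_ppart]
  change ⟪qpart u, ppart w⟫ + ⟪ppart u, -qpart w⟫ = _
  rw [inner_neg_right, ← sub_eq_add_neg, PiLp.inner_apply, PiLp.inner_apply,
    ← Finset.sum_sub_distrib]
  simp [mul_comm]

def timeMomentumUnit (n : ℕ) : Phase (n + 1) := pt 0 (EuclideanSpace.single (Fin.last n) 1)

theorem inner_timeMomentumUnit_left {n : ℕ} (z : Phase (n + 1)) :
    ⟪timeMomentumUnit n, z⟫ = ppart z (Fin.last n) := by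
  rw [inner_eq_qpart_add_ppart]
  change ⟪(0 : V (n + 1)), qpart z⟫ + ⟪EuclideanSpace.single (Fin.last n) 1, ppart z⟫ = _
  simp [EuclideanSpace.inner_single_left]

theorem inner_Jmap_timeMomentumUnit {n : ℕ} (u : Phase (n + 1)) :
    ⟪u, Jmap (timeMomentumUnit n)⟫ = qpart u (Fin.last n) := by
  rw [inner_eq_qpart_add_ppart]
  change ⟪qpart u, EuclideanSpace.single (Fin.last n) 1⟫ + ⟪ppart u, -(0 : V (n + 1))⟫ = _
  simp [EuclideanSpace.inner_single_right]

theorem inner_Jmap_eq_sum_castSucc {n : ℕ} (u w : Phase (n + 1))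
    (hq : qpart u (Fin.last n) = 0) (hp : ppart u (Fin.last n) = 0) :
    ⟪u, Jmap w⟫ = ∑ i : Fin n,
      (qpart u i.castSucc * ppart w i.castSucc - ppart u i.castSucc * qpart w i.castSucc) := by
  rw [inner_Jmap_eq_sum, Fin.sum_univ_castSucc, hq, hp]
  ring

end ExtendedPhaseSpace

theorem extended_quadratic_conservation_general (n : ℕ)
    (H : Phase (n + 1) → ℝ) (hH : ContDiff ℝ 3 H)
    (𝓗 : Phase (n + 1) → ℝ)
    (h𝓗 : ∀ z : Phase (n + 1), 𝓗 z = ppart z (Fin.last n) + H z)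
    (A : Phase (n + 1) →L[ℝ] Phase (n + 1))
    (hA : ∀ v w : Phase (n + 1), ⟪A v, w⟫ = ⟪v, A w⟫)
    (b : Phase (n + 1)) (c : ℝ) (L : Phase (n + 1) → ℝ)
    (hL : ∀ z : Phase (n + 1), L z = (1 / 2 : ℝ) * ⟪z, A z⟫ + ⟪b, z⟫ + c)
    (hLt : ∀ z : Phase (n + 1), qpart (gradient L z) (Fin.last n) = 0)
    (hLwp : ∀ z : Phase (n + 1), ppart (gradient L z) (Fin.last n) = 0)
    (hbr : ∀ z : Phase (n + 1),
      ∑ i : Fin n,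
        (qpart (gradient L z) i.castSucc * ppart (gradient H z) i.castSucc
          - ppart (gradient L z) i.castSucc * qpart (gradient H z) i.castSucc) = 0)
    (z₀ z₁ : Phase (n + 1)) (lam mu : ℝ)
    (zbar : Phase (n + 1)) (hzbar : zbar = (2:ℝ)⁻¹ • (z₀ + z₁))
    (hstep : z₁ - z₀
      = lam • Jmap (gradient 𝓗 zbar) + mu • Jmap (gradient (psi 𝓗) zbar)) :
    L z₁ = L z₀ := by
  have h𝓗_eq : 𝓗 = fun z => innerSL ℝ (timeMomentumUnit n) z + H z :=
    funext fun z => by rw [h𝓗, innerSL_apply_apply, inner_timeMomentumUnit_left]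
  have h𝓗_smooth : ContDiff ℝ 3 𝓗 := h𝓗_eq ▸ (innerSL ℝ _).contDiff.add hH
  have hgradL (z) : gradient L z = A z + b := (hasGradientAt_of_quadratic hA hL z).gradient
  have hgrad𝓗 (z) : gradient 𝓗 z = timeMomentumUnit n + gradient H z := by
    refine HasGradientAt.gradient ?_
    rw [h𝓗_eq, hasGradientAt_iff_hasFDerivAt, map_add]
    exact (innerSL ℝ _).hasFDerivAt.add (hH.differentiable (by norm_num) z).hasGradientAt
  have hbracket (z) : ⟪A z + b, Jmap (gradient 𝓗 z)⟫ = 0 := by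
    rw [← hgradL, hgrad𝓗, map_add, inner_add_right, inner_Jmap_timeMomentumUnit,
      inner_Jmap_eq_sum_castSucc _ _ (hLt z) (hLwp z), hLt z, hbr z, add_zero]
  have hbracketψ : ⟪A zbar + b, Jmap (gradient (psi 𝓗) zbar)⟫ = 0 :=
    inner_J_gradient_psiWith_eq_zero inner_Jmap_left hA h𝓗_smooth hbracket zbar
  rw [← sub_eq_zero, sub_eq_inner_midpoint_of_quadratic hA hL, ← hzbar, hstep, inner_add_right,
    real_inner_smul_right, real_inner_smul_right, hbracket, hbracketψ, mul_zero, mul_zero, add_zero]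

/-- conservation of quadratic momenta in extended phase space.
On extended phase space `ℝ^(n+1) × ℝ^(n+1)` with `z = (q₁,…,qₙ, t, p₁,…,pₙ, ℘)`,
let `𝓗(z) = ℘ + H(z)` where `H` is `C³` with `∂H/∂℘ ≡ 0`, and let
`L(z) = ½⟨z, Az⟩ + ⟨b, z⟩ + c` be quadratic with `∂L/∂t ≡ 0`, `∂L/∂℘ ≡ 0` and
`Σᵢ₌₁ⁿ (L_{qᵢ} H_{pᵢ} - L_{pᵢ} H_{qᵢ}) ≡ 0`. If
`z₁ - z₀ = λ J∇𝓗(z̄) + μ J∇ψ_𝓗(z̄)` with `z̄ = (z₀ + z₁)/2`, then `L(z₁) = L(z₀)`. -/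
theorem extended_quadratic_conservation (n : ℕ) (hn : 1 ≤ n)
    (H : Phase (n + 1) → ℝ) (hH : ContDiff ℝ 3 H)
    (hHwp : ∀ z : Phase (n + 1), ppart (gradient H z) (Fin.last n) = 0)
    (𝓗 : Phase (n + 1) → ℝ)
    (h𝓗 : ∀ z : Phase (n + 1), 𝓗 z = ppart z (Fin.last n) + H z)
    (A : Phase (n + 1) →L[ℝ] Phase (n + 1))
    (hA : ∀ v w : Phase (n + 1), ⟪A v, w⟫ = ⟪v, A w⟫)
    (b : Phase (n + 1)) (c : ℝ) (L : Phase (n + 1) → ℝ)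
    (hL : ∀ z : Phase (n + 1), L z = (1 / 2 : ℝ) * ⟪z, A z⟫ + ⟪b, z⟫ + c)
    (hLt : ∀ z : Phase (n + 1), qpart (gradient L z) (Fin.last n) = 0)
    (hLwp : ∀ z : Phase (n + 1), ppart (gradient L z) (Fin.last n) = 0)
    (hbr : ∀ z : Phase (n + 1),
      ∑ i : Fin n,
        (qpart (gradient L z) i.castSucc * ppart (gradient H z) i.castSucc
          - ppart (gradient L z) i.castSucc * qpart (gradient H z) i.castSucc) = 0)
    (z₀ z₁ : Phase (n + 1)) (lam mu : ℝ)
    (zbar : Phase (n + 1)) (hzbar : zbar = (2:ℝ)⁻¹ • (z₀ + z₁))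
    (hstep : z₁ - z₀
      = lam • Jmap (gradient 𝓗 zbar) + mu • Jmap (gradient (psi 𝓗) zbar)) :
    L z₁ = L z₀ :=
  extended_quadratic_conservation_general n H hH 𝓗 h𝓗 A hA b c L hL hLt hLwp hbr z₀ z₁ lam mu zbar
    hzbar hstep
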